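/- If G is a graph satisfying the Erdős–Faber–Lovász hypothesis (G is the union of n complete graphs A_1, …, A_n, each on exactly n vertices, with every pair of the complete graphs sharing at most one common vertex), and for every d with 2 ≤ d ≤ n and every i (1 ≤ i ≤ n) the complete graph A_i contains at most ⌈n/d⌉ vertices of clique degree greater than or equal to d, then G has a proper vertex coloring with n colors (the chromatic number of G is at most n). -/

import Mathlib

/-!
Colour greedily in order of decreasing clique degree. When a vertex `v` of clique degree `d`
is reached, every already coloured neighbour `u` has clique degree at least `d` and shares with
`v` one of the `d` cliques through `v`. Each such clique contains at most `⌈n/d⌉` vertices of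
clique degree `≥ d`, one of which is `v`, so `v` has at most `d (⌈n/d⌉ - 1) ≤ n - 1` coloured
neighbours and one of the `n` colours is still free.
-/

open Finset

namespace SimpleGraph

variable {V α : Type*} [DecidableEq V] [LinearOrder α] (G : SimpleGraph V) [DecidableRel G.Adj]

theorem exists_coloring_on_of_card_adj_lt (w : V → α) {n : ℕ} (hn : 0 < n) (s : Finset V)
    (h : ∀ v ∈ s, #{u ∈ s | G.Adj u v ∧ w v ≤ w u} < n) :
    ∃ c : V → Fin n, ∀ u ∈ s, ∀ v ∈ s, G.Adj u v → c u ≠ c v := by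
  induction s using Finset.induction_on_min_value w with
  | empty => exact ⟨fun _ => ⟨0, hn⟩, by simp⟩
  | insert a t hat hmin ih =>
    obtain ⟨c, hc⟩ := ih fun v hv =>
      (card_le_card (filter_subset_filter _ (subset_insert a t))).trans_lt
        (h v (mem_insert_of_mem hv))
    have hused : #({u ∈ t | G.Adj u a}.image c) < #(univ : Finset (Fin n)) := by
      rw [card_fin]
      refine card_image_le.trans_lt ((card_le_card fun u hu => ?_).trans_lt
        (h a (mem_insert_self a t)))
      obtain ⟨hut, hua⟩ := mem_filter.1 hu
      exact mem_filter.2 ⟨mem_insert_of_mem hut, hua, hmin u hut⟩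
    obtain ⟨k, -, hk⟩ := exists_mem_notMem_of_card_lt_card hused
    have hfree : ∀ u ∈ t, G.Adj u a → c u ≠ k := fun u hu hua hck =>
      hk (mem_image.2 ⟨u, mem_filter.2 ⟨hu, hua⟩, hck⟩)
    have hupdate : ∀ u ∈ t, Function.update c a k u = c u := fun u hu =>
      Function.update_of_ne (ne_of_mem_of_not_mem hu hat) _ _
    refine ⟨Function.update c a k, ?_⟩
    intro u hu v hv huv
    rcases mem_insert.1 hu with rfl | hut <;> rcases mem_insert.1 hv with rfl | hvt
    · exact (G.irrefl huv).elim
    · rw [Function.update_self, hupdate v hvt]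
      exact (hfree v hvt huv.symm).symm
    · rw [Function.update_self, hupdate u hut]
      exact hfree u hut huv
    · rw [hupdate u hut, hupdate v hvt]
      exact hc u hut v hvt huv

end SimpleGraph

theorem Nat.mul_pred_div_add_pred_lt {n d : ℕ} (hn : 0 < n) (hd : 0 < d) :
    d * ((n + d - 1) / d - 1) < n := by
  have := Nat.div_mul_le_self (n + d - 1) d
  rw [Nat.mul_sub_one, Nat.mul_comm]
  omega

section CliqueDegree

variable {V : Type*} [DecidableEq V] {n : ℕ} (A : Fin n → Finset V)

def cliqueDegree (v : V) : ℕ := #{i | v ∈ A i}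

theorem cliqueDegree_le (v : V) : cliqueDegree A v ≤ n :=
  (card_filter_le _ _).trans_eq (card_fin n)

theorem cliqueDegree_pos {v : V} {i : Fin n} (hv : v ∈ A i) : 0 < cliqueDegree A v :=
  card_pos.2 ⟨i, mem_filter.2 ⟨mem_univ i, hv⟩⟩

theorem card_adj_cliqueDegree_le_lt (G : SimpleGraph V) [DecidableRel G.Adj]
    (hG : ∀ u v, G.Adj u v → ∃ i, u ∈ A i ∧ v ∈ A i)
    (hbound : ∀ d, 1 ≤ d → d ≤ n → ∀ i, #{u ∈ A i | d ≤ cliqueDegree A u} ≤ (n + d - 1) / d)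
    {v : V} {i : Fin n} (hv : v ∈ A i) (s : Finset V) :
    #{u ∈ s | G.Adj u v ∧ cliqueDegree A v ≤ cliqueDegree A u} < n := by
  set d := cliqueDegree A v
  have hd : 0 < d := cliqueDegree_pos A hv
  have hdn : d ≤ n := cliqueDegree_le A v
  calc #{u ∈ s | G.Adj u v ∧ d ≤ cliqueDegree A u}
      ≤ #(({j | v ∈ A j} : Finset (Fin n)).biUnion fun j =>
          ({u ∈ A j | d ≤ cliqueDegree A u}).erase v) := by
        refine card_le_card fun u hu => ?_
        obtain ⟨-, huv, hdu⟩ := mem_filter.1 hu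
        obtain ⟨j, huj, hvj⟩ := hG u v huv
        exact mem_biUnion.2 ⟨j, mem_filter.2 ⟨mem_univ j, hvj⟩,
          mem_erase.2 ⟨G.ne_of_adj huv, mem_filter.2 ⟨huj, hdu⟩⟩⟩
    _ ≤ ∑ j with v ∈ A j, #(({u ∈ A j | d ≤ cliqueDegree A u}).erase v) := card_biUnion_le
    _ ≤ ∑ j with v ∈ A j, ((n + d - 1) / d - 1) := by
        refine sum_le_sum fun j hj => ?_
        have hvj : v ∈ ({u ∈ A j | d ≤ cliqueDegree A u} : Finset V) :=
          mem_filter.2 ⟨(mem_filter.1 hj).2, le_rfl⟩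
        rw [card_erase_of_mem hvj]
        exact Nat.sub_le_sub_right (hbound d hd hdn j) 1
    _ = d * ((n + d - 1) / d - 1) := by rw [sum_const, smul_eq_mul]; rfl
    _ < n := Nat.mul_pred_div_add_pred_lt (hd.trans_le hdn) hd

end CliqueDegree

theorem efl_ceil_bound_general {V : Type*} [DecidableEq V] (n : ℕ) (hn : 1 ≤ n)
    (A : Fin n → Finset V)
    (hcard : ∀ i, (A i).card = n)
    (G : SimpleGraph V)
    (hG : ∀ u v, G.Adj u v ↔ u ≠ v ∧ ∃ i, u ∈ A i ∧ v ∈ A i)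
    (hceil : ∀ d, 2 ≤ d → d ≤ n → ∀ i, ((A i).filter (fun v =>
        d ≤ (Finset.univ.filter (fun j => v ∈ A j)).card)).card ≤ (n + d - 1) / d) :
    G.Colorable n := by
  classical
  have hA : ∀ u v, G.Adj u v → ∃ i, u ∈ A i ∧ v ∈ A i := fun u v huv => ((hG u v).1 huv).2
  have hbound : ∀ d, 1 ≤ d → d ≤ n → ∀ i,
      #{u ∈ A i | d ≤ cliqueDegree A u} ≤ (n + d - 1) / d := by
    intro d hd hdn i
    rcases hd.eq_or_lt with rfl | hd
    · simpa [hcard i] using card_filter_le (A i) _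
    · exact hceil d hd hdn i
  have hS : ∀ u v, G.Adj u v → u ∈ univ.biUnion A := fun u v huv =>
    let ⟨i, hu, _⟩ := hA u v huv; mem_biUnion.2 ⟨i, mem_univ i, hu⟩
  obtain ⟨c, hc⟩ := G.exists_coloring_on_of_card_adj_lt (cliqueDegree A) hn (univ.biUnion A)
    fun v hv =>
      let ⟨_, _, hvi⟩ := mem_biUnion.1 hv
      card_adj_cliqueDegree_le_lt A G hA hbound hvi _
  exact ⟨.mk c fun {u v} huv => hc u (hS u v huv) v (hS v u huv.symm) huv⟩

/-- **EFL for graphs, ⌈n/d⌉ bound (Hegde–Dara, Theorem 2).**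
If `G` is the union of `n` complete graphs `A 0, …, A (n-1)`, each on exactly `n`
vertices, any two sharing at most one vertex, and for every `d` with `2 ≤ d ≤ n`
every `A i` has at most `⌈n/d⌉` vertices of clique degree at least `d`,
then `G` is `n`-colorable. -/
theorem efl_ceil_bound {V : Type*} [DecidableEq V] (n : ℕ) (hn : 1 ≤ n)
    (A : Fin n → Finset V)
    (hcard : ∀ i, (A i).card = n)
    (hint : ∀ i j, i ≠ j → (A i ∩ A j).card ≤ 1)
    (G : SimpleGraph V)
    (hG : ∀ u v, G.Adj u v ↔ u ≠ v ∧ ∃ i, u ∈ A i ∧ v ∈ A i)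
    (hceil : ∀ d, 2 ≤ d → d ≤ n → ∀ i, ((A i).filter (fun v =>
        d ≤ (Finset.univ.filter (fun j => v ∈ A j)).card)).card ≤ (n + d - 1) / d) :
    G.Colorable n :=
  efl_ceil_bound_general n hn A hcard G hG hceil
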